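/- arXiv:1504.06745 — 3 statements merged into one kernel-verified Lean document; each statement's English description precedes it below -/
import Mathlib

section
/- Let L and L' be real linear spaces, K ⊆ L a subset, and G : L → L' an affine map. If for every extreme point k' of G(K) the fiber G⁻¹(k') ∩ K has at least one extreme point, then G(ext(K)) ⊇ ext(G(K)). -/
/-! The fiber of an affine map over an extreme point of the image is an extreme subset of `K`,
and extreme points of an extreme subset of `K` are extreme points of `K`. -/

open Set

theorem IsExtreme.preimage_inter {𝕜 E F : Type*} [Ring 𝕜] [PartialOrder 𝕜] [AddRightMono 𝕜]
    [AddCommGroup E] [Module 𝕜 E] [AddCommGroup F] [Module 𝕜 F]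
    (f : E →ᵃ[𝕜] F) {A : Set E} {B : Set F} (hB : IsExtreme 𝕜 (f '' A) B) :
    IsExtreme 𝕜 A (f ⁻¹' B ∩ A) := by
  refine ⟨inter_subset_right, fun x hx y hy z ⟨hzB, _⟩ hz ↦ ⟨?_, hx⟩⟩
  have hfz : f z ∈ openSegment 𝕜 (f x) (f y) := image_openSegment 𝕜 f x y ▸ mem_image_of_mem f hz
  exact hB.left_mem_of_mem_openSegment (mem_image_of_mem f hx) (mem_image_of_mem f hy) hzB hfz

/-- affine images of extreme points cover extreme points of the image. -/
theorem affine_image_extremePoints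
    {L L' : Type*} [AddCommGroup L] [Module ℝ L] [AddCommGroup L'] [Module ℝ L']
    (G : L →ᵃ[ℝ] L') (K : Set L)
    (h : ∀ k' ∈ (⇑G '' K).extremePoints ℝ, ((⇑G ⁻¹' {k'} ∩ K).extremePoints ℝ).Nonempty) :
    (⇑G '' K).extremePoints ℝ ⊆ ⇑G '' (K.extremePoints ℝ) := by
  intro k' hk'
  obtain ⟨x, hx⟩ := h k' hk'
  have hfiber : IsExtreme ℝ K (G ⁻¹' {k'} ∩ K) := (isExtreme_singleton.2 hk').preimage_inter G
  exact ⟨x, hfiber.extremePoints_subset_extremePoints hx, hx.1.1⟩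
end

section
/- Let X be a Borel subset of a Polish metric space, let c : X × X → [0, ∞) be lower semicontinuous, let μₙ be a probability measure on X supported on at most n points, and ε > 0. Then the set Γ = {ν ∈ 𝓜(X×X) : P₁ν = μₙ and ∫ c dν ≤ ε} satisfies ext(Γ) ⊆ Δ_{n+2}(X×X), i.e., every extreme point of Γ is a convex combination of at most n+2 Dirac masses on X × X. -/
/-!
An extreme point `ν` of `Γ` admits no nonzero bounded perturbation `ν (1 ± h)` inside `Γ`.
Take `h = ∑ βᵢ 1_{Aᵢ}` for disjoint `ν`-positive sets `Aᵢ`, each inside a fibre `{xᵢ} × X`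
over one of the `n` atoms of `μₙ`: keeping both perturbations in `Γ` costs only `n + 1` linear
conditions on `β` (one mass condition per fibre, one for the cost), so there are at most `n + 1`
such sets. Distinct points of the fibrewise supports of `ν` can be separated by disjoint open sets,
so these supports consist of at most `n + 1` points, and they carry `ν`.
-/

open MeasureTheory

/-- An extreme point of a set of probability measures. -/
def IsExtremePt {Ω : Type*} [MeasurableSpace Ω]
    (C : Set (ProbabilityMeasure Ω)) (μ : ProbabilityMeasure Ω) : Prop :=
  μ ∈ C ∧ ∀ μ₁ ∈ C, ∀ μ₂ ∈ C, ∀ θ : ENNReal, 0 < θ → θ < 1 →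
    (μ : Measure Ω) = θ • (μ₁ : Measure Ω) + (1 - θ) • (μ₂ : Measure Ω) →
    μ₁ = μ ∧ μ₂ = μ

/-- `μ` is supported on at most `n` points. -/
def FinitelySupported {α : Type*} [MeasurableSpace α] (n : ℕ) (μ : Measure α) : Prop :=
  ∃ t : Finset α, t.card ≤ n ∧ μ ((↑t : Set α)ᶜ) = 0

/-- The moment-constrained set `Γ = {ν : P₁ν = μₙ, ∫ c dν ≤ ε}`. -/
def Gamma {α : Type*} [MeasurableSpace α] (μn : ProbabilityMeasure α)
    (c : α × α → ℝ) (ε : ℝ) : Set (ProbabilityMeasure (α × α)) :=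
  {ν | (ν : Measure (α × α)).map Prod.fst = (μn : Measure α) ∧
    ∫⁻ p, ENNReal.ofReal (c p) ∂(ν : Measure (α × α)) ≤ ENNReal.ofReal ε}

open Set Function

lemma lintegral_ofReal_one_add_eq_measure_univ {Ω : Type*} [MeasurableSpace Ω] {ρ : Measure Ω}
    [IsFiniteMeasure ρ] {h : Ω → ℝ} (hint : Integrable h ρ) (hle : ∀ x, -1 ≤ h x)
    (h0 : ∫ x, h x ∂ρ = 0) : ∫⁻ x, ENNReal.ofReal (1 + h x) ∂ρ = ρ univ := by
  have hint' : Integrable (fun x => 1 + h x) ρ := (integrable_const 1).add hint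
  rw [← ofReal_integral_eq_lintegral_ofReal hint' (ae_of_all _ fun x => by
    simp only [Pi.zero_apply]; linarith [hle x]),
    integral_add (integrable_const 1) hint, h0, add_zero, integral_const, smul_eq_mul, mul_one,
    ofReal_measureReal]

lemma withDensity_ofReal_one_add_add_one_sub {Ω : Type*} [MeasurableSpace Ω] (ν : Measure Ω)
    {h : Ω → ℝ} (hh : Measurable h) (habs : ∀ x, |h x| ≤ 1) :
    (2 : ENNReal)⁻¹ • ν.withDensity (fun x => ENNReal.ofReal (1 + h x)) +
      (2 : ENNReal)⁻¹ • ν.withDensity (fun x => ENNReal.ofReal (1 - h x)) = ν := by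
  rw [← withDensity_smul _ (by fun_prop), ← withDensity_smul _ (by fun_prop),
    ← withDensity_add_left (by fun_prop)]
  conv_rhs => rw [← withDensity_one (μ := ν)]
  congr 1
  funext x
  obtain ⟨h₁, h₂⟩ := abs_le.1 (habs x)
  simp only [Pi.add_apply, Pi.smul_apply, smul_eq_mul, Pi.one_apply, ← mul_add]
  rw [← ENNReal.ofReal_add (by linarith) (by linarith), show 1 + h x + (1 - h x) = 2 by ring]
  simp [ENNReal.inv_mul_cancel]

lemma IsExtremePt.ae_eq_zero_of_withDensity_mem {Ω : Type*} [MeasurableSpace Ω]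
    {C : Set (ProbabilityMeasure Ω)} {ν : ProbabilityMeasure Ω} (hν : IsExtremePt C ν)
    {h : Ω → ℝ} (hh : Measurable h) (habs : ∀ x, |h x| ≤ 1) {ρ₁ ρ₂ : ProbabilityMeasure Ω}
    (hρ₁ : ρ₁ ∈ C) (hρ₂ : ρ₂ ∈ C)
    (hρ₁_eq : (ρ₁ : Measure Ω) = (ν : Measure Ω).withDensity fun x => ENNReal.ofReal (1 + h x))
    (hρ₂_eq : (ρ₂ : Measure Ω) = (ν : Measure Ω).withDensity fun x => ENNReal.ofReal (1 - h x)) :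
    h =ᵐ[(ν : Measure Ω)] 0 := by
  obtain ⟨hρ₁ν, -⟩ := hν.2 ρ₁ hρ₁ ρ₂ hρ₂ 2⁻¹ (by simp) (ENNReal.inv_lt_one.2 ENNReal.one_lt_two)
    (by rw [ENNReal.one_sub_inv_two, hρ₁_eq, hρ₂_eq,
      withDensity_ofReal_one_add_add_one_sub (ν : Measure Ω) hh habs])
  have hdens : (ν : Measure Ω).withDensity (fun x => ENNReal.ofReal (1 + h x)) =
      (ν : Measure Ω).withDensity 1 := by
    rw [← hρ₁_eq, hρ₁ν, withDensity_one]
  rw [withDensity_eq_iff_of_sigmaFinite (by fun_prop) (by fun_prop)] at hdens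
  filter_upwards [hdens] with x hx
  have := ENNReal.ofReal_eq_one.1 hx
  simp only [Pi.zero_apply]
  linarith

lemma exists_withDensity_mem_gamma {α : Type*} [MeasurableSpace α] {μn : ProbabilityMeasure α}
    {c : α × α → ℝ} {ε : ℝ} (hc : Measurable c) {ν : ProbabilityMeasure (α × α)}
    (hν : ν ∈ Gamma μn c ε) {h : α × α → ℝ} (hh : Measurable h) (habs : ∀ p, |h p| ≤ 1)
    (hmarg : ∀ B, MeasurableSet B → ∫ p in Prod.fst ⁻¹' B, h p ∂(ν : Measure (α × α)) = 0)
    (hcost : ∫ p, h p ∂(ν : Measure (α × α)).withDensity (fun p => ENNReal.ofReal (c p)) = 0) :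
    ∃ ρ ∈ Gamma μn c ε, (ρ : Measure (α × α)) =
      (ν : Measure (α × α)).withDensity fun p => ENNReal.ofReal (1 + h p) := by
  set ρ := (ν : Measure (α × α)).withDensity fun p => ENNReal.ofReal (1 + h p)
  have hle : ∀ p, -1 ≤ h p := fun p => (abs_le.1 (habs p)).1
  have hint : ∀ ρ' : Measure (α × α), [IsFiniteMeasure ρ'] → Integrable h ρ' := fun ρ' _ =>
    Integrable.of_bound hh.aestronglyMeasurable 1 (ae_of_all _ fun p => by
      simpa only [Real.norm_eq_abs] using habs p)
  have hmap : ρ.map Prod.fst = (ν : Measure (α × α)).map Prod.fst := by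
    ext B hB
    rw [Measure.map_apply measurable_fst hB, Measure.map_apply measurable_fst hB,
      withDensity_apply _ (measurable_fst hB), lintegral_ofReal_one_add_eq_measure_univ
        (hint _) hle (hmarg B hB), Measure.restrict_apply_univ]
  have hprob : IsProbabilityMeasure ρ := ⟨by
    simpa [Measure.map_apply measurable_fst MeasurableSet.univ] using congrArg (· univ) hmap⟩
  refine ⟨⟨ρ, hprob⟩, ⟨hmap.trans hν.1, ?_⟩, rfl⟩
  have hcm : Measurable fun p => ENNReal.ofReal (c p) := hc.ennreal_ofReal
  have hfin : IsFiniteMeasure ((ν : Measure (α × α)).withDensity fun p => ENNReal.ofReal (c p)) :=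
    isFiniteMeasure_withDensity (ne_top_of_le_ne_top ENNReal.ofReal_ne_top hν.2)
  calc ∫⁻ p, ENNReal.ofReal (c p) ∂ρ
      = ∫⁻ p, ENNReal.ofReal (1 + h p) ∂(ν : Measure (α × α)).withDensity
          (fun p => ENNReal.ofReal (c p)) := by
        rw [lintegral_withDensity_eq_lintegral_mul _ (by fun_prop) hcm,
          lintegral_withDensity_eq_lintegral_mul _ hcm (by fun_prop)]
        simp only [Pi.mul_apply, mul_comm]
    _ = ∫⁻ p, ENNReal.ofReal (c p) ∂(ν : Measure (α × α)) := by
        rw [lintegral_ofReal_one_add_eq_measure_univ (hint _) hle hcost,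
          withDensity_apply _ MeasurableSet.univ, Measure.restrict_univ]
    _ ≤ ENNReal.ofReal ε := hν.2

lemma IsExtremePt.ae_eq_zero_of_gamma {α : Type*} [MeasurableSpace α] {μn : ProbabilityMeasure α}
    {c : α × α → ℝ} {ε : ℝ} (hc : Measurable c) {ν : ProbabilityMeasure (α × α)}
    (hν : IsExtremePt (Gamma μn c ε) ν) {h : α × α → ℝ} (hh : Measurable h)
    (habs : ∀ p, |h p| ≤ 1)
    (hmarg : ∀ B, MeasurableSet B → ∫ p in Prod.fst ⁻¹' B, h p ∂(ν : Measure (α × α)) = 0)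
    (hcost : ∫ p, h p ∂(ν : Measure (α × α)).withDensity (fun p => ENNReal.ofReal (c p)) = 0) :
    h =ᵐ[(ν : Measure (α × α))] 0 := by
  obtain ⟨ρ₁, hρ₁, hρ₁_eq⟩ := exists_withDensity_mem_gamma hc hν.1 hh habs hmarg hcost
  obtain ⟨ρ₂, hρ₂, hρ₂_eq⟩ := exists_withDensity_mem_gamma hc hν.1 hh.neg
    (fun p => by simpa only [Pi.neg_apply, abs_neg] using habs p)
    (fun B hB => by simp only [Pi.neg_apply, integral_neg, hmarg B hB, neg_zero])
    (by simp only [Pi.neg_apply, integral_neg, hcost, neg_zero])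
  simp only [Pi.neg_apply, ← sub_eq_add_neg] at hρ₂_eq
  exact hν.ae_eq_zero_of_withDensity_mem hh habs hρ₁ hρ₂ hρ₁_eq hρ₂_eq

lemma exists_ne_zero_sum_mul_eq_zero {κ ι : Type*} [Fintype κ] [Fintype ι] (v : κ → ι → ℝ)
    (hcard : Fintype.card κ < Fintype.card ι) :
    ∃ β : ι → ℝ, β ≠ 0 ∧ ∑ i, |β i| ≤ 1 ∧ ∀ k, ∑ i, β i * v k i = 0 := by
  obtain ⟨β, hβker, hβ0⟩ := Submodule.exists_mem_ne_zero_of_ne_bot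
    (LinearMap.ker_ne_bot_of_finrank_lt (f := Matrix.mulVecLin (Matrix.of v))
      (by simpa only [Module.finrank_fintype_fun_eq_card] using hcard))
  have hpos : 0 < ∑ i, |β i| := by
    obtain ⟨i, hi⟩ := Function.ne_iff.1 hβ0
    exact lt_of_lt_of_le (abs_pos.2 hi) (Finset.single_le_sum (fun j _ => abs_nonneg (β j))
      (Finset.mem_univ i))
  refine ⟨(∑ i, |β i|)⁻¹ • β, smul_ne_zero (inv_ne_zero hpos.ne') hβ0, ?_, fun k => ?_⟩
  · simp only [Pi.smul_apply, smul_eq_mul, abs_mul, abs_inv, abs_of_pos hpos, ← Finset.mul_sum,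
      inv_mul_cancel₀ hpos.ne', le_refl]
  · have hk := congrFun (LinearMap.mem_ker.1 hβker) k
    simp only [Matrix.mulVecLin_apply, Matrix.mulVec, dotProduct, Matrix.of_apply,
      Pi.zero_apply] at hk
    simp only [Pi.smul_apply, smul_eq_mul, mul_assoc, ← Finset.mul_sum, mul_comm (β _), hk,
      mul_zero]

lemma Finset.sum_filter_mem_eq_zero_of_fiberwise {ι α M : Type*} [AddCommMonoid M] [DecidableEq α]
    {s : Finset ι} {t : Finset α} {x : ι → α} (hx : ∀ i ∈ s, x i ∈ t) {w : ι → M}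
    (hw : ∀ z ∈ t, ∑ i ∈ s with x i = z, w i = 0) (B : Set α) [DecidablePred (· ∈ B)] :
    ∑ i ∈ s with x i ∈ B, w i = 0 := by
  rw [← Finset.sum_fiberwise_of_maps_to (g := x) (t := t) fun i hi => hx i (mem_filter.1 hi).1]
  refine Finset.sum_eq_zero fun z hz => ?_
  rw [Finset.filter_filter]
  by_cases hzB : z ∈ B
  · rw [← hw z hz]
    exact Finset.sum_congr (Finset.filter_congr fun i _ => ⟨And.right, fun h => ⟨h ▸ hzB, h⟩⟩)
      fun _ _ => rfl
  · refine Finset.sum_eq_zero fun i hi => absurd ?_ hzB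
    obtain ⟨-, hxB, rfl⟩ := mem_filter.1 hi
    exact hxB

section IndicatorSum

variable {Ω ι : Type*} [Fintype ι] {A : ι → Set Ω}

lemma integral_sum_indicator_const [MeasurableSpace Ω] (ρ : Measure Ω) [IsFiniteMeasure ρ]
    (hA : ∀ i, MeasurableSet (A i)) (β : ι → ℝ) :
    ∫ p, ∑ i, (A i).indicator (fun _ => β i) p ∂ρ = ∑ i, ρ.real (A i) * β i := by
  rw [integral_finsetSum _ fun i _ => (integrable_const (β i)).indicator (hA i)]
  simp only [integral_indicator_const _ (hA _), smul_eq_mul]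

lemma abs_sum_indicator_const_le (β : ι → ℝ) (p : Ω) :
    |∑ i, (A i).indicator (fun _ => β i) p| ≤ ∑ i, |β i| :=
  (Finset.abs_sum_le_sum_abs _ _).trans <| Finset.sum_le_sum fun i _ => by
    by_cases hp : p ∈ A i <;> simp [hp]

lemma sum_indicator_const_of_mem (hdisj : Pairwise (Disjoint on A)) (β : ι → ℝ) {j : ι} {p : Ω}
    (hp : p ∈ A j) : ∑ i, (A i).indicator (fun _ => β i) p = β j := by
  rw [Finset.sum_eq_single j (fun i _ hij => indicator_of_notMem
    (Set.disjoint_left.1 (hdisj hij.symm) hp) _) (by simp), indicator_of_mem hp]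

lemma eq_zero_of_sum_indicator_const_ae_eq_zero [MeasurableSpace Ω] {ν : Measure Ω}
    (hdisj : Pairwise (Disjoint on A)) (hpos : ∀ i, ν (A i) ≠ 0) {β : ι → ℝ}
    (h0 : (fun p => ∑ i, (A i).indicator (fun _ => β i) p) =ᵐ[ν] 0) : β = 0 := by
  funext j
  obtain ⟨p, hpA, hp⟩ := ν.exists_mem_of_measure_ne_zero_of_ae (hpos j) (ae_restrict_of_ae h0)
  exact (sum_indicator_const_of_mem hdisj β hpA).symm.trans hp

end IndicatorSum

open scoped Classical in
theorem IsExtremePt.card_le_card_add_one_of_pairwiseDisjoint {α ι : Type*} [MeasurableSpace α]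
    [Fintype ι] {μn : ProbabilityMeasure α} {c : α × α → ℝ} {ε : ℝ}
    (hc : Measurable c) {ν : ProbabilityMeasure (α × α)} (hν : IsExtremePt (Gamma μn c ε) ν)
    {t : Finset α} {x : ι → α} (hx : ∀ i, x i ∈ t) {A : ι → Set (α × α)}
    (hA : ∀ i, MeasurableSet (A i)) (hAx : ∀ i, A i ⊆ Prod.fst ⁻¹' {x i})
    (hdisj : Pairwise (Disjoint on A)) (hpos : ∀ i, (ν : Measure (α × α)) (A i) ≠ 0) :
    Fintype.card ι ≤ t.card + 1 := by
  set νc := (ν : Measure (α × α)).withDensity fun p => ENNReal.ofReal (c p)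
  have : IsFiniteMeasure νc := isFiniteMeasure_withDensity
    (ne_top_of_le_ne_top ENNReal.ofReal_ne_top hν.1.2)
  by_contra! hlt
  -- the conditions on `β`: the cost, and the mass in each fibre over `t`
  let v : Option t → ι → ℝ
    | none, i => νc.real (A i)
    | some z, i => if x i = z then (ν : Measure (α × α)).real (A i) else 0
  obtain ⟨β, hβ0, hβ1, hβv⟩ := exists_ne_zero_sum_mul_eq_zero v (by simpa using hlt)
  have hh : Measurable fun p => ∑ i, (A i).indicator (fun _ => β i) p :=
    Finset.measurable_sum _ fun i _ => measurable_const.indicator (hA i)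
  refine hβ0 (eq_zero_of_sum_indicator_const_ae_eq_zero hdisj hpos
    (hν.ae_eq_zero_of_gamma hc hh ?_ ?_ ?_))
  · exact fun p => (abs_sum_indicator_const_le β p).trans hβ1
  · intro B hB
    have hfib : ∀ z ∈ t, ∑ i with x i = z, (ν : Measure (α × α)).real (A i) * β i = 0 :=
      fun z hz => by simpa [v, Finset.sum_filter, mul_comm] using hβv (some ⟨z, hz⟩)
    rw [integral_sum_indicator_const _ hA,
      ← Finset.sum_filter_mem_eq_zero_of_fiberwise (fun i _ => hx i) hfib B, Finset.sum_filter]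
    refine Finset.sum_congr rfl fun i _ => ?_
    rw [measureReal_restrict_apply (hA i)]
    split_ifs with hxB
    · rw [inter_eq_left.2 ((hAx i).trans (preimage_mono (singleton_subset_iff.2 hxB)))]
    · have : Disjoint (A i) (Prod.fst ⁻¹' B) :=
        disjoint_left.2 fun p hp hpB => hxB (hAx i hp ▸ hpB)
      rw [this.inter_eq, measureReal_empty, zero_mul]
  · rw [integral_sum_indicator_const _ hA]
    simpa [v, mul_comm] using hβv none

lemma FinitelySupported.mono {α : Type*} [MeasurableSpace α] {m n : ℕ} {μ : Measure α}
    (h : FinitelySupported m μ) (hmn : m ≤ n) : FinitelySupported n μ :=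
  let ⟨t, htm, ht⟩ := h
  ⟨t, htm.trans hmn, ht⟩

lemma measure_compl_biUnion_support_restrict {X κ : Type*} [TopologicalSpace X]
    [HereditarilyLindelofSpace X] [MeasurableSpace X] (ν : Measure X) (t : Finset κ)
    (E : κ → Set X) (hE : ν (⋃ z ∈ t, E z)ᶜ = 0) :
    ν (⋃ z ∈ t, (ν.restrict (E z)).support)ᶜ = 0 := by
  have hsub : (⋃ z ∈ t, (ν.restrict (E z)).support)ᶜ ⊆
      (⋃ z ∈ t, E z)ᶜ ∪ ⋃ z ∈ t, (ν.restrict (E z)).supportᶜ ∩ E z := by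
    intro p hp
    by_cases hpE : p ∈ ⋃ z ∈ t, E z
    · obtain ⟨z, hz, hpz⟩ := mem_iUnion₂.1 hpE
      exact Or.inr (mem_iUnion₂.2 ⟨z, hz, fun hps => hp (mem_iUnion₂.2 ⟨z, hz, hps⟩), hpz⟩)
    · exact Or.inl hpE
  refine measure_mono_null hsub (measure_union_null hE ?_)
  refine (measure_biUnion_null_iff t.countable_toSet).2 fun z _ => ?_
  exact le_antisymm ((Measure.le_restrict_apply _ _).trans_eq Measure.measure_compl_support)
    zero_le

lemma mem_of_mem_support_restrict {X : Type*} [TopologicalSpace X] [MeasurableSpace X]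
    [OpensMeasurableSpace X] {ν : Measure X} {E : Set X} (hE : IsClosed E) {p : X}
    (hp : p ∈ (ν.restrict E).support) : p ∈ E :=
  hE.closure_eq ▸ (Measure.support_restrict_subset hp).1

lemma pos_measure_inter_of_mem_support_restrict {X : Type*} [TopologicalSpace X]
    [MeasurableSpace X] [OpensMeasurableSpace X] {ν : Measure X} {E : Set X} {p : X}
    (hp : p ∈ (ν.restrict E).support) {U : Set X} (hU : IsOpen U) (hpU : p ∈ U) :
    0 < ν (U ∩ E) := by
  rw [← Measure.restrict_apply hU.measurableSet]
  exact (Measure.mem_support_iff_forall p).1 hp U (hU.mem_nhds hpU)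

lemma Set.exists_finset_coe_eq_of_forall_card_le {α : Type*} {S : Set α} {N : ℕ}
    (h : ∀ F : Finset α, ↑F ⊆ S → F.card ≤ N) : ∃ T : Finset α, ↑T = S ∧ T.card ≤ N := by
  have hS : S.Finite := not_infinite.1 fun hinf => by
    obtain ⟨F, hFS, hFcard⟩ := hinf.exists_subset_card_eq (N + 1)
    have := h F hFS
    omega
  exact ⟨hS.toFinset, by simp, h _ (by simp)⟩

theorem IsExtremePt.finitelySupported_succ_of_gamma {α : Type*} [TopologicalSpace α] [T2Space α]
    [SecondCountableTopology α] [MeasurableSpace α] [OpensMeasurableSpace α] {n : ℕ}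
    {μn : ProbabilityMeasure α} (hμn : FinitelySupported n (μn : Measure α)) {c : α × α → ℝ}
    (hc : Measurable c) {ε : ℝ} {ν : ProbabilityMeasure (α × α)}
    (hν : IsExtremePt (Gamma μn c ε) ν) :
    FinitelySupported (n + 1) (ν : Measure (α × α)) := by
  obtain ⟨t, htn, ht⟩ := hμn
  set S := ⋃ z ∈ t, ((ν : Measure (α × α)).restrict (Prod.fst ⁻¹' {z})).support
  have hS : (ν : Measure (α × α)) Sᶜ = 0 := by
    refine measure_compl_biUnion_support_restrict _ t _ ?_
    rw [← preimage_iUnion₂, ← Finset.set_biUnion_coe, biUnion_of_singleton, ← preimage_compl,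
      ← Measure.map_apply measurable_fst t.finite_toSet.measurableSet.compl, hν.1.1]
    exact ht
  have hSfib : ∀ p ∈ S,
      p.1 ∈ t ∧ p ∈ ((ν : Measure (α × α)).restrict (Prod.fst ⁻¹' {p.1})).support := by
    intro p hp
    obtain ⟨z, hz, hpz⟩ := mem_iUnion₂.1 hp
    obtain rfl : p.1 = z :=
      mem_of_mem_support_restrict (isClosed_singleton.preimage continuous_fst) hpz
    exact ⟨hz, hpz⟩
  have hcard : ∀ F : Finset (α × α), ↑F ⊆ S → F.card ≤ t.card + 1 := by
    intro F hF
    obtain ⟨U, hU, hUdisj⟩ := F.finite_toSet.t2_separation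
    simpa using hν.card_le_card_add_one_of_pairwiseDisjoint (ι := F) hc
      (x := fun p => p.1.1) (A := fun p => U p ∩ Prod.fst ⁻¹' {p.1.1})
      (fun p => (hSfib p (hF p.2)).1)
      (fun p => (hU p).2.measurableSet.inter (measurable_fst (measurableSet_singleton _)))
      (fun p => inter_subset_right)
      (fun p q hpq => (hUdisj p.2 q.2 (Subtype.val_injective.ne hpq)).mono inter_subset_left
        inter_subset_left)
      (fun p => (pos_measure_inter_of_mem_support_restrict (hSfib p (hF p.2)).2
        (hU p).2 (hU p).1).ne')
  obtain ⟨T, hTS, hT⟩ := Set.exists_finset_coe_eq_of_forall_card_le hcard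
  exact ⟨T, hT.trans (by omega), hTS ▸ hS⟩

theorem extremePt_gamma_finitelySupported_general
    {Y : Type*} [MetricSpace Y] [PolishSpace Y] [MeasurableSpace Y] [BorelSpace Y]
    (s : Set Y) (n : ℕ)
    (μn : ProbabilityMeasure s) (hμn : FinitelySupported n (μn : Measure s))
    (c : s × s → ℝ) (hlsc : LowerSemicontinuous c)
    (ε : ℝ)
    (ν : ProbabilityMeasure (s × s)) (hν : IsExtremePt (Gamma μn c ε) ν) :
    FinitelySupported (n + 2) (ν : Measure (s × s)) :=
  (hν.finitelySupported_succ_of_gamma hμn hlsc.measurable).mono (Nat.le_succ _)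

/-- every extreme point of `Γ` is supported on at most `n+2` points of `X × X`. -/
theorem extremePt_gamma_finitelySupported
    {Y : Type*} [MetricSpace Y] [PolishSpace Y] [MeasurableSpace Y] [BorelSpace Y]
    (s : Set Y) (hs : MeasurableSet s) (n : ℕ)
    (μn : ProbabilityMeasure s) (hμn : FinitelySupported n (μn : Measure s))
    (c : s × s → ℝ) (hc : ∀ p, 0 ≤ c p) (hlsc : LowerSemicontinuous c)
    (ε : ℝ) (hε : 0 < ε)
    (ν : ProbabilityMeasure (s × s)) (hν : IsExtremePt (Gamma μn c ε) ν) :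
    FinitelySupported (n + 2) (ν : Measure (s × s)) :=
  extremePt_gamma_finitelySupported_general s n μn hμn c hlsc ε ν hν
end

section
/- Let X be a Borel subset of a Polish metric space and let 𝓜(X) carry the Kantorovich extended metric d_K(μ₁, μ₂) = sup{∫ f d(μ₁−μ₂) : ‖f‖_L ≤ 1}. For μₙ supported on at most n points and ε > 0, every extreme point of the ball B_ε(μₙ) = {μ : d_K(μ, μₙ) ≤ ε} is supported on at most n+2 points. -/
/-!
Write `μₙ = ∑ i, m i • δ (y i)`. If `μ` lies in the Kantorovich ball of radius `ε` about `μₙ`,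
semi-discrete Kantorovich duality provides a transport plan from `μ` to `μₙ` of cost at most `ε`.
We realise plans as families of positive functionals `T i` on `L¹(μ)` adding up to the integral,
so that Banach–Alaoglu makes the set of plans compact and a Hahn–Banach separation in `ℝ^ι × ℝ`
reduces existence to the dual inequality, which the ball condition gives.

If `μ` were not supported on `n + 2` points, it would charge `n + 3` disjoint sets `B j`. The
at most `n + 1` linear conditions "the masses `T i 1` and the total cost do not change" then
leave a nonzero `g = ∑ j, c j • 1_{B j}` with `|g| ≤ 1` along which the plan can be reweighted,
so that both `(1 + g) μ` and `(1 - g) μ` stay in the ball; their average is `μ`, against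
extremality.
-/

open MeasureTheory

/-- The Kantorovich extended metric
`d_K(μ₁,μ₂) = sup {∫ f dμ₁ − ∫ f dμ₂ : ‖f‖_L ≤ 1}`. -/
noncomputable def kantDist {X : Type*} [MetricSpace X] [MeasurableSpace X]
    (μ₁ μ₂ : Measure X) : ENNReal :=
  ⨆ f : {f : X → ℝ // LipschitzWith 1 f},
    ENNReal.ofReal ((∫ x, f.1 x ∂μ₁) - ∫ x, f.1 x ∂μ₂)

open Set Function
open scoped NNReal ENNReal

namespace MeasureTheory

variable {X : Type*} [MeasurableSpace X] {μ : Measure X}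

open Classical in
noncomputable def L1Class (μ : Measure X) (g : X → ℝ) : Lp ℝ 1 μ :=
  if hg : Integrable g μ then hg.toL1 g else 0

lemma L1Class_of_integrable {g : X → ℝ} (hg : Integrable g μ) : L1Class μ g = hg.toL1 g := by
  rw [L1Class, dif_pos hg]

lemma L1Class_zero : L1Class μ 0 = 0 := by
  rw [L1Class_of_integrable (integrable_zero X ℝ μ), Integrable.toL1_zero]

lemma L1Class_add {f g : X → ℝ} (hf : Integrable f μ) (hg : Integrable g μ) :
    L1Class μ (f + g) = L1Class μ f + L1Class μ g := by
  rw [L1Class_of_integrable (hf.add hg), L1Class_of_integrable hf, L1Class_of_integrable hg,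
    Integrable.toL1_add]

lemma L1Class_sub {f g : X → ℝ} (hf : Integrable f μ) (hg : Integrable g μ) :
    L1Class μ (f - g) = L1Class μ f - L1Class μ g := by
  rw [L1Class_of_integrable (hf.sub hg), L1Class_of_integrable hf, L1Class_of_integrable hg,
    Integrable.toL1_sub]

lemma L1Class_smul (c : ℝ) (g : X → ℝ) : L1Class μ (c • g) = c • L1Class μ g := by
  by_cases hg : Integrable g μ
  · rw [L1Class_of_integrable (hg.smul c), L1Class_of_integrable hg, Integrable.toL1_smul']
  rcases eq_or_ne c 0 with rfl | hc
  · rw [zero_smul, zero_smul, L1Class_zero]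
  · rw [L1Class, dif_neg ((integrable_smul_iff hc g).not.mpr hg), L1Class, dif_neg hg, smul_zero]

lemma L1Class_sum {κ : Type*} {s : Finset κ} {f : κ → X → ℝ}
    (hf : ∀ j ∈ s, Integrable (f j) μ) : L1Class μ (∑ j ∈ s, f j) = ∑ j ∈ s, L1Class μ (f j) := by
  classical
  induction s using Finset.induction_on with
  | empty => simp [L1Class_zero]
  | insert a s ha ih =>
    rw [Finset.sum_insert ha, Finset.sum_insert ha,
      L1Class_add (hf a (Finset.mem_insert_self a s))
        (integrable_finsetSum' s fun j hj => hf j (Finset.mem_insert_of_mem hj)),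
      ih fun j hj => hf j (Finset.mem_insert_of_mem hj)]

lemma L1Class_mono {f g : X → ℝ} (hf : Integrable f μ) (hg : Integrable g μ) (hfg : f ≤ᵐ[μ] g) :
    L1Class μ f ≤ L1Class μ g := by
  rw [L1Class_of_integrable hf, L1Class_of_integrable hg, ← Lp.coeFn_le]
  filter_upwards [hf.coeFn_toL1, hg.coeFn_toL1, hfg] with x hfx hgx hx
  rwa [hfx, hgx]

lemma integral_L1Class (g : X → ℝ) : ∫ x, L1Class μ g x ∂μ = ∫ x, g x ∂μ := by
  by_cases hg : Integrable g μ
  · rw [L1Class_of_integrable hg, integral_congr_ae hg.coeFn_toL1]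
  · rw [L1Class, dif_neg hg, integral_undef hg, ← L1.integral_eq_integral, L1.integral_zero]

lemma apply_L1Class_sum_smul {κ : Type*} [Fintype κ] (T : WeakDual ℝ (Lp ℝ 1 μ))
    {f : κ → X → ℝ} (hf : ∀ j, Integrable (f j) μ) (c : κ → ℝ) :
    T (L1Class μ (∑ j, c j • f j)) = ∑ j, c j * T (L1Class μ (f j)) := by
  rw [L1Class_sum fun j _ => (hf j).smul (c j), map_sum]
  simp_rw [L1Class_smul, map_smul, smul_eq_mul]

lemma exists_partition_forall_le {ι : Type*} [Finite ι] [Nonempty ι] (g : ι → X → ℝ)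
    (hg : ∀ i, Measurable (g i)) :
    ∃ A : ι → Set X, (∀ i, MeasurableSet (A i)) ∧ Pairwise (Disjoint on A) ∧ ⋃ i, A i = univ ∧
      ∀ i, ∀ x ∈ A i, ∀ j, g j x ≤ g i x := by
  have := Fintype.ofFinite ι
  let M : ι → Set X := fun i => {x | ∀ j, g j x ≤ g i x}
  have hM : ∀ i, MeasurableSet (M i) := fun i => by
    simp only [M, ofPred_forall]
    exact MeasurableSet.iInter fun j => measurableSet_le (hg j) (hg i)
  have hM_cover : ⋃ i, M i = univ :=
    eq_univ_of_forall fun x => mem_iUnion.mpr (Finite.exists_max (g · x))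
  let e := Fintype.equivFin ι
  refine ⟨fun i => disjointed (M ∘ e.symm) (e i), fun i => ?_,
    fun i j hij => disjoint_disjointed _ (e.injective.ne hij), ?_, fun i x hx => ?_⟩
  · exact disjointedRec (fun _ _ ht => ht.diff (hM _)) (hM _)
  · exact (e.surjective.iUnion_comp _).trans
      (iUnion_disjointed.trans ((e.symm.surjective.iUnion_comp M).trans hM_cover))
  · simpa [M] using disjointed_subset _ _ hx

noncomputable def setIntegralL1 (μ : Measure X) (A : Set X) : WeakDual ℝ (Lp ℝ 1 μ) :=
  L1.integralCLM.comp (LpToLpRestrictCLM X ℝ ℝ μ 1 A)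

lemma setIntegralL1_apply (A : Set X) (f : Lp ℝ 1 μ) :
    setIntegralL1 μ A f = ∫ x in A, f x ∂μ := by
  rw [← integral_congr_ae (LpToLpRestrictCLM_coeFn ℝ A f), ← L1.integral_eq_integral,
    L1.integral_eq]
  rfl

variable {ι : Type*} [Fintype ι]

/-- Transport plans from `μ` to measures on `ι`: the `i`-th part of a plan is the positive
functional `f ↦ ∫ f dπᵢ` on `L¹(μ)`, and the parts add up to `μ`. -/
def splittings (μ : Measure X) (ι : Type*) [Fintype ι] : Set (ι → WeakDual ℝ (Lp ℝ 1 μ)) :=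
  {T | (∀ i f, 0 ≤ f → 0 ≤ T i f) ∧ ∀ f, ∑ i, T i f = ∫ x, f x ∂μ}

lemma sum_apply_L1Class_of_mem_splittings {T : ι → WeakDual ℝ (Lp ℝ 1 μ)}
    (hT : T ∈ splittings μ ι) (g : X → ℝ) : ∑ i, T i (L1Class μ g) = ∫ x, g x ∂μ := by
  rw [hT.2, integral_L1Class]

lemma apply_L1Class_mono_of_mem_splittings {T : ι → WeakDual ℝ (Lp ℝ 1 μ)}
    (hT : T ∈ splittings μ ι) (i : ι) {f g : X → ℝ} (hf : Integrable f μ) (hg : Integrable g μ)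
    (hfg : f ≤ᵐ[μ] g) : T i (L1Class μ f) ≤ T i (L1Class μ g) := by
  have h := hT.1 i _ (sub_nonneg.mpr (L1Class_mono hf hg hfg))
  rwa [map_sub, sub_nonneg] at h

lemma norm_toStrongDual_le_one_of_mem_splittings {T : ι → WeakDual ℝ (Lp ℝ 1 μ)}
    (hT : T ∈ splittings μ ι) (i : ι) : ‖WeakDual.toStrongDual (T i)‖ ≤ 1 := by
  refine ContinuousLinearMap.opNorm_le_bound _ zero_le_one fun f => ?_
  have h_abs : |T i f| ≤ T i |f| := by
    have h₁ := hT.1 i _ (sub_nonneg.mpr (le_abs_self f))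
    have h₂ := hT.1 i _ (neg_le_iff_add_nonneg'.mp (neg_le_abs f))
    rw [map_sub] at h₁
    rw [map_add] at h₂
    exact abs_le.mpr ⟨by linarith, by linarith⟩
  have h_sum : T i |f| ≤ ∑ j, T j |f| :=
    Finset.single_le_sum (fun j _ => hT.1 j _ (abs_nonneg f)) (Finset.mem_univ i)
  have h_norm : ∑ j, T j |f| = ‖f‖ := by
    rw [hT.2, L1.norm_eq_integral_norm, integral_congr_ae (Lp.coeFn_abs f)]
    rfl
  simpa [Real.norm_eq_abs, one_mul] using h_abs.trans (h_sum.trans h_norm.le)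

lemma isCompact_splittings : IsCompact (splittings μ ι) := by
  have h_ball : IsCompact (univ.pi fun _ : ι =>
      WeakDual.toStrongDual ⁻¹' Metric.closedBall (0 : StrongDual ℝ (Lp ℝ 1 μ)) 1) :=
    isCompact_univ_pi fun _ => WeakDual.isCompact_closedBall 0 1
  refine h_ball.of_isClosed_subset ?_ fun T hT => ?_
  · have h_eval : ∀ i f, Continuous fun T : ι → WeakDual ℝ (Lp ℝ 1 μ) => T i f :=
      fun i f => (WeakDual.eval_continuous f).comp (continuous_apply i)
    simp only [splittings, ofPred_and, ofPred_forall]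
    exact (isClosed_iInter fun i => isClosed_iInter fun f => isClosed_iInter fun _ =>
        isClosed_le continuous_const (h_eval i f)).inter
      (isClosed_iInter fun f => isClosed_eq (continuous_finsetSum _ fun i _ => h_eval i f)
        continuous_const)
  · simpa using fun i => norm_toStrongDual_le_one_of_mem_splittings hT i

lemma convex_splittings : Convex ℝ (splittings μ ι) := by
  intro T hT T' hT' a b ha hb hab
  refine ⟨fun i f hf => ?_, fun f => ?_⟩
  · have := hT.1 i f hf
    have := hT'.1 i f hf
    show 0 ≤ a * T i f + b * T' i f
    positivity
  · change ∑ i, (a * T i f + b * T' i f) = _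
    rw [Finset.sum_add_distrib, ← Finset.mul_sum, ← Finset.mul_sum, hT.2, hT'.2, ← add_mul, hab,
      one_mul]

lemma mem_splittings_of_partition {A : ι → Set X} (hA : ∀ i, MeasurableSet (A i))
    (hd : Pairwise (Disjoint on A)) (hU : ⋃ i, A i = univ) :
    (fun i => setIntegralL1 μ (A i)) ∈ splittings μ ι := by
  refine ⟨fun i f hf => ?_, fun f => ?_⟩
  · rw [setIntegralL1_apply]
    exact integral_nonneg_of_ae (ae_restrict_of_ae ((Lp.coeFn_nonneg f).mpr hf))
  · simp_rw [setIntegralL1_apply]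
    rw [← integral_iUnion_fintype hA hd fun i => (L1.integrable_coeFn f).integrableOn, hU,
      Measure.restrict_univ]

lemma exists_mem_splittings_sum_eq_integral_iSup [Nonempty ι] {g : ι → X → ℝ}
    (hgm : ∀ i, Measurable (g i)) (hg : ∀ i, Integrable (g i) μ) :
    ∃ T ∈ splittings μ ι, ∑ i, T i (L1Class μ (g i)) = ∫ x, ⨆ i, g i x ∂μ := by
  obtain ⟨A, hA, hd, hU, hmax⟩ := exists_partition_forall_le g hgm
  have h_eq : ∀ i, ∀ x ∈ A i, g i x = ⨆ j, g j x := fun i x hx =>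
    le_antisymm (le_ciSup (f := (g · x)) (Finite.bddAbove_range _) i) (ciSup_le (hmax i x hx))
  refine ⟨_, mem_splittings_of_partition hA hd hU, ?_⟩
  rw [← setIntegral_univ, ← hU, integral_iUnion_fintype hA hd fun i =>
    (hg i).integrableOn.congr_fun (h_eq i) (hA i)]
  refine Finset.sum_congr rfl fun i _ => ?_
  rw [setIntegralL1_apply, L1Class_of_integrable (hg i),
    integral_congr_ae (ae_restrict_of_ae (hg i).coeFn_toL1)]
  exact setIntegral_congr_fun (hA i) (h_eq i)

end MeasureTheory

section Kantorovich

variable {X : Type*} [MetricSpace X] [MeasurableSpace X] {μ ν : Measure X} {ε : ℝ}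

lemma ofReal_integral_sub_integral_le_kantDist {f : X → ℝ} (hf : LipschitzWith 1 f) :
    ENNReal.ofReal (∫ x, f x ∂μ - ∫ x, f x ∂ν) ≤ kantDist μ ν :=
  le_iSup (fun f : {f : X → ℝ // LipschitzWith 1 f} =>
    ENNReal.ofReal (∫ x, f.1 x ∂μ - ∫ x, f.1 x ∂ν)) ⟨f, hf⟩

lemma kantDist_le_ofReal_iff (hε : 0 ≤ ε) :
    kantDist μ ν ≤ ENNReal.ofReal ε ↔
      ∀ f : X → ℝ, LipschitzWith 1 f → ∫ x, f x ∂μ - ∫ x, f x ∂ν ≤ ε := by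
  simp only [kantDist, iSup_le_iff, ENNReal.ofReal_le_ofReal_iff hε, Subtype.forall]

variable [IsProbabilityMeasure μ] [IsProbabilityMeasure ν]

lemma integral_sub_integral_le_of_kantDist_le (hε : 0 ≤ ε) (h : kantDist μ ν ≤ ENNReal.ofReal ε)
    {K : ℝ≥0} {f : X → ℝ} (hf : LipschitzWith K f) :
    ∫ x, f x ∂μ - ∫ x, f x ∂ν ≤ K * ε := by
  rcases eq_or_ne K 0 with rfl | hK
  · obtain ⟨x₀⟩ := nonempty_of_isProbabilityMeasure μ
    have h_const : f = fun _ => f x₀ := funext fun x => by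
      simpa using hf.dist_le_mul x x₀
    rw [h_const]
    simp
  · have h_lip : LipschitzWith 1 fun x => (K : ℝ)⁻¹ * f x := by
      refine LipschitzWith.of_dist_le_mul fun x x' => ?_
      rw [Real.dist_eq, ← mul_sub, abs_mul, abs_inv, NNReal.abs_eq, NNReal.coe_one, one_mul,
        inv_mul_le_iff₀ (by positivity), ← Real.dist_eq]
      exact hf.dist_le_mul x x'
    have h_scaled := (kantDist_le_ofReal_iff hε).mp h _ h_lip
    rwa [integral_const_mul, integral_const_mul, ← mul_sub,
      inv_mul_le_iff₀ (by positivity)] at h_scaled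

lemma integrable_of_kantDist_ne_top [OpensMeasurableSpace X]
    (hν : ∀ f : X → ℝ, LipschitzWith 1 f → Integrable f ν)
    (h : kantDist μ ν ≠ ⊤) {f : X → ℝ} (hf : LipschitzWith 1 f) : Integrable f μ := by
  obtain ⟨x₀⟩ := nonempty_of_isProbabilityMeasure μ
  have h_dist : Integrable (dist · x₀) μ := by
    by_contra h_not
    refine h (ENNReal.eq_top_of_forall_nnreal_le fun r => ?_)
    -- the `μ`-integral of `dist · x₀ + c` is the junk value `0` for every constant `c`
    set c := -(∫ x, dist x x₀ ∂ν) - r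
    have h_lip : LipschitzWith 1 fun x => dist x x₀ + c := by
      simpa using (LipschitzWith.dist_left x₀).add (LipschitzWith.const c)
    calc (r : ℝ≥0∞) = ENNReal.ofReal (∫ x, dist x x₀ + c ∂μ - ∫ x, dist x x₀ + c ∂ν) := by
          rw [integral_undef ((integrable_add_const_iff).not.mpr h_not),
            integral_add (hν _ (LipschitzWith.dist_left x₀)) (integrable_const c), integral_const]
          simp [c]
      _ ≤ kantDist μ ν := ofReal_integral_sub_integral_le_kantDist h_lip
  refine (h_dist.add (integrable_const |f x₀|)).mono' hf.continuous.aestronglyMeasurable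
    (ae_of_all _ fun x => ?_)
  have h_lip := hf.dist_le_mul x x₀
  rw [NNReal.coe_one, one_mul, Real.dist_eq] at h_lip
  rw [Real.norm_eq_abs, Pi.add_apply]
  linarith [abs_sub_abs_le_abs_sub (f x) (f x₀)]

end Kantorovich

section FiniteSupport

variable {X : Type*} [MeasurableSpace X] [MeasurableSingletonClass X] {ν : Measure X}
  [IsFiniteMeasure ν] {t : Finset X}

lemma integrable_of_measure_compl_finset (ht : ν (↑t)ᶜ = 0) (f : X → ℝ) : Integrable f ν := by
  rw [← Measure.restrict_eq_self_of_ae_mem (s := (t : Set X)) (mem_ae_iff.mpr ht)]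
  exact IntegrableOn.finset

lemma integral_eq_sum_of_measure_compl_finset (ht : ν (↑t)ᶜ = 0) (f : X → ℝ) :
    ∫ x, f x ∂ν = ∑ z : t, ν.real {↑z} * f z := by
  calc ∫ x, f x ∂ν = ∫ x in t, f x ∂ν := by
        rw [Measure.restrict_eq_self_of_ae_mem (s := (t : Set X)) (mem_ae_iff.mpr ht)]
    _ = ∑ z : t, ν.real {↑z} * f z := by
        rw [setIntegral_finset t IntegrableOn.finset, ← Finset.sum_coe_sort]
        rfl

end FiniteSupport

lemma ContinuousLinearMap.exists_apply_prod_eq {ι : Type*} [Fintype ι]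
    (ψ : (ι → ℝ) × ℝ →L[ℝ] ℝ) :
    ∃ (α : ι → ℝ) (β : ℝ), ∀ z, ψ z = ∑ i, z.1 i * α i + z.2 * β := by
  classical
  refine ⟨fun i => ψ (fun j => if i = j then 1 else 0, 0), ψ (0, 1), fun z => ?_⟩
  have h_split : ψ z = ψ (z.1, 0) + z.2 * ψ (0, 1) := by
    rw [← smul_eq_mul, ← map_smul, ← map_add, Prod.smul_mk, smul_zero, smul_eq_mul, mul_one,
      Prod.mk_add_mk, add_zero, zero_add]
  have h_fst := ((ψ.comp (.inl ℝ _ ℝ)) : (ι → ℝ) →ₗ[ℝ] ℝ).pi_apply_eq_sum_univ z.1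
  simp only [ContinuousLinearMap.coe_coe, ContinuousLinearMap.comp_apply,
    ContinuousLinearMap.inl_apply, smul_eq_mul] at h_fst
  rw [h_split, h_fst]

lemma LipschitzWith.ciSup {X ι : Type*} [PseudoMetricSpace X] [Finite ι] [Nonempty ι]
    {K : ℝ≥0} {f : ι → X → ℝ} (hf : ∀ i, LipschitzWith K (f i)) :
    LipschitzWith K fun x => ⨆ i, f i x :=
  LipschitzWith.of_le_add_mul K fun x x' => ciSup_le fun i =>
    ((hf i).le_add_mul x x').trans
      (add_le_add_left (le_ciSup (f := (f · x')) (Finite.bddAbove_range _) i) _)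

section Transport

variable {X : Type*} [MetricSpace X] [MeasurableSpace X] [BorelSpace X] {μ : Measure X}
  [IsProbabilityMeasure μ] {ι : Type*} [Fintype ι] {y : ι → X} {m : ι → ℝ} {ε : ℝ}
  (hm : ∀ i, 0 ≤ m i) (hint : ∀ f : X → ℝ, LipschitzWith 1 f → Integrable f μ)
  (hball : ∀ (K : ℝ≥0) (f : X → ℝ), LipschitzWith K f →
    ∫ x, f x ∂μ - ∑ i, m i * f (y i) ≤ K * ε)
include hm hint hball

/-- The dual inequality, witnessed by sending each point to a maximiser of `α i + β d(x, y i)`.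
The maximum `G` is `(-β)`-Lipschitz with `α i ≤ G (y i)`, and `hball` bounds `∫ G dμ` below. -/
lemma exists_mem_splittings_le (α : ι → ℝ) {β : ℝ} (hβ : β ≤ 0) :
    ∃ T ∈ splittings μ ι, ∑ i, m i * α i + ε * β ≤
      ∑ i, T i (L1Class μ 1) * α i + (∑ i, T i (L1Class μ (dist · (y i)))) * β := by
  have : Nonempty ι := by
    by_contra h
    have h_const := hball 0 (fun _ => 1) (LipschitzWith.const 1)
    norm_num [not_nonempty_iff.mp h] at h_const
  let g : ι → X → ℝ := fun i x => α i + β * dist x (y i)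
  have hg_int : ∀ i, Integrable (g i) μ := fun i =>
    (integrable_const _).add ((hint _ (LipschitzWith.dist_left (y i))).const_mul β)
  obtain ⟨T, hT, hT_sup⟩ := exists_mem_splittings_sum_eq_integral_iSup
    (fun i => by fun_prop : ∀ i, Measurable (g i)) hg_int
  refine ⟨T, hT, ?_⟩
  have h_eval : ∑ i, T i (L1Class μ 1) * α i + (∑ i, T i (L1Class μ (dist · (y i)))) * β =
      ∑ i, T i (L1Class μ (g i)) := by
    have h_lin : ∀ i, L1Class μ (g i) = α i • L1Class μ 1 + β • L1Class μ (dist · (y i)) := by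
      intro i
      rw [← L1Class_smul, ← L1Class_smul, ← L1Class_add ?_ ?_]
      · congr 1
        ext x
        simp [g]
      · exact (integrable_const 1).smul _
      · exact (hint _ (LipschitzWith.dist_left (y i))).smul _
    simp only [h_lin, map_add, map_smul, smul_eq_mul, Finset.sum_add_distrib, Finset.sum_mul]
    congr 1 <;> exact Finset.sum_congr rfl fun i _ => mul_comm _ _
  have hG_lip : LipschitzWith ⟨-β, neg_nonneg.mpr hβ⟩ fun x => ⨆ i, g i x :=
    LipschitzWith.ciSup fun i => LipschitzWith.of_le_add_mul _ fun x x' => by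
      show α i + β * dist x (y i) ≤ α i + β * dist x' (y i) + -β * dist x x'
      nlinarith [dist_triangle_left x' (y i) x]
  have hG_y : ∀ i, α i ≤ ⨆ j, g j (y i) := fun i => by
    simpa [g] using le_ciSup (f := fun j => g j (y i)) (Finite.bddAbove_range _) i
  have h_atoms : ∑ i, m i * α i ≤ ∑ i, m i * ⨆ j, g j (y i) :=
    Finset.sum_le_sum fun i _ => mul_le_mul_of_nonneg_left (hG_y i) (hm i)
  have h_ball := hball _ _ hG_lip.neg
  simp only [Pi.neg_apply, integral_neg, mul_neg, Finset.sum_neg_distrib] at h_ball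
  change _ ≤ -β * ε at h_ball
  rw [h_eval, hT_sup]
  linarith

/-- Kantorovich duality for a target `∑ i, m i • δ (y i)`: there is a transport plan of cost
at most `ε`. -/
theorem exists_mem_splittings_cost_le :
    ∃ T ∈ splittings μ ι, (∀ i, T i (L1Class μ 1) = m i) ∧
      ∑ i, T i (L1Class μ (dist · (y i))) ≤ ε := by
  let φ : (ι → WeakDual ℝ (Lp ℝ 1 μ)) → (ι → ℝ) × ℝ :=
    fun T => (fun i => T i (L1Class μ 1), ∑ i, T i (L1Class μ (dist · (y i))))
  have hφ_cont : Continuous φ := by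
    have h_eval : ∀ i f, Continuous fun T : ι → WeakDual ℝ (Lp ℝ 1 μ) => T i f :=
      fun i f => (WeakDual.eval_continuous f).comp (continuous_apply i)
    exact (continuous_pi fun i => h_eval i _).prodMk (continuous_finsetSum _ fun i _ => h_eval i _)
  have hφ_lin : IsLinearMap ℝ φ :=
    ⟨fun T T' => Prod.ext rfl Finset.sum_add_distrib,
      fun c T => Prod.ext rfl (Finset.mul_sum _ _ _).symm⟩
  by_contra h_none
  have h_disj : Disjoint (φ '' splittings μ ι) ({m} ×ˢ Iic ε) := by
    refine disjoint_left.mpr ?_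
    rintro _ ⟨T, hT, rfl⟩ ⟨h_mass, h_cost⟩
    exact h_none ⟨T, hT, congrFun h_mass, h_cost⟩
  obtain ⟨ψ, u, v, hS, huv, hR⟩ := geometric_hahn_banach_compact_closed
    (convex_splittings.is_linear_image hφ_lin) (isCompact_splittings.image hφ_cont)
    ((convex_singleton m).prod (convex_Iic ε)) (isClosed_singleton.prod isClosed_Iic) h_disj
  obtain ⟨α, β, hψ⟩ := ψ.exists_apply_prod_eq
  have hβ : β ≤ 0 := by
    by_contra! hβ
    set τ := max 0 ((∑ i, m i * α i + ε * β - v) / β)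
    have h_far := hR (m, ε - τ) ⟨rfl, show ε - τ ≤ ε from sub_le_self _ (le_max_left _ _)⟩
    have h_τ : (∑ i, m i * α i + ε * β - v) / β ≤ τ := le_max_right _ _
    rw [div_le_iff₀ hβ] at h_τ
    rw [hψ] at h_far
    nlinarith
  obtain ⟨T, hT, h_le⟩ := exists_mem_splittings_le hm hint hball α hβ
  have h_sep := hS _ ⟨T, hT, rfl⟩
  have h_target := hR (m, ε) ⟨rfl, show ε ≤ ε from le_rfl⟩
  rw [hψ] at h_sep h_target
  linarith

end Transport

section Perturbation

variable {X : Type*} [MetricSpace X] [MeasurableSpace X] {μ : Measure X} [IsFiniteMeasure μ]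
  {ι : Type*} [Fintype ι] {y : ι → X} {T : ι → WeakDual ℝ (Lp ℝ 1 μ)}
  (hint : ∀ f : X → ℝ, LipschitzWith 1 f → Integrable f μ)
include hint

lemma integral_mul_sub_sum_le_of_mem_splittings (hT : T ∈ splittings μ ι) {h : X → ℝ}
    (hh : Measurable h) (hh_nonneg : ∀ x, 0 ≤ h x) {C : ℝ} (hh_le : ∀ x, h x ≤ C) {f : X → ℝ}
    (hf : LipschitzWith 1 f) :
    ∫ x, h x * f x ∂μ - ∑ i, T i (L1Class μ h) * f (y i) ≤
      ∑ i, T i (L1Class μ fun x => h x * dist x (y i)) := by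
  have h_mul : ∀ u : X → ℝ, Integrable u μ → Integrable (fun x => h x * u x) μ := fun u hu =>
    hu.bdd_mul hh.aestronglyMeasurable (ae_of_all _ fun x => by
      rw [Real.norm_eq_abs, abs_of_nonneg (hh_nonneg x)]
      exact hh_le x)
  have h_int : Integrable h μ := by simpa using h_mul _ (integrable_const 1)
  have hf_int := h_mul _ (hint f hf)
  have h_step : ∀ i, T i (L1Class μ fun x => h x * f x) - T i (L1Class μ h) * f (y i) ≤
      T i (L1Class μ fun x => h x * dist x (y i)) := by
    intro i
    rw [mul_comm, ← smul_eq_mul, ← map_smul, ← L1Class_smul, ← map_sub,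
      ← L1Class_sub hf_int (h_int.smul _)]
    refine apply_L1Class_mono_of_mem_splittings hT i (hf_int.sub (h_int.smul _))
      (h_mul _ (hint _ (LipschitzWith.dist_left (y i)))) (ae_of_all _ fun x => ?_)
    have h_lip : f x - f (y i) ≤ dist x (y i) := by
      simpa [Real.dist_eq] using (le_abs_self _).trans (hf.dist_le_mul x (y i))
    simp only [Pi.sub_apply, Pi.smul_apply, smul_eq_mul]
    nlinarith [mul_le_mul_of_nonneg_left h_lip (hh_nonneg x)]
  calc _ = ∑ i, (T i (L1Class μ fun x => h x * f x) - T i (L1Class μ h) * f (y i)) := by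
        rw [Finset.sum_sub_distrib, sum_apply_L1Class_of_mem_splittings hT]
    _ ≤ _ := Finset.sum_le_sum fun i _ => h_step i

lemma kantDist_withDensity_le_of_mem_splittings (hT : T ∈ splittings μ ι) {m : ι → ℝ}
    (h_mass : ∀ i, T i (L1Class μ 1) = m i) {ε : ℝ} (hε : 0 ≤ ε)
    (h_cost : ∑ i, T i (L1Class μ (dist · (y i))) ≤ ε) {ν : Measure X}
    (hν : ∀ f : X → ℝ, ∫ x, f x ∂ν = ∑ i, m i * f (y i)) {g : X → ℝ} (hg : Measurable g)
    (hg_le : ∀ x, |g x| ≤ 1) (hg_mass : ∀ i, T i (L1Class μ g) = 0)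
    (hg_cost : ∑ i, T i (L1Class μ (g * fun x => dist x (y i))) = 0) {s : ℝ} (hs : |s| ≤ 1) :
    kantDist (μ.withDensity fun x => ENNReal.ofReal (1 + s * g x)) ν ≤ ENNReal.ofReal ε := by
  have hsg_le : ∀ x, |s * g x| ≤ 1 := fun x => by
    rw [abs_mul]
    exact mul_le_one₀ hs (abs_nonneg _) (hg_le x)
  have h_nonneg : ∀ x, 0 ≤ 1 + s * g x := fun x => by linarith [neg_abs_le (s * g x), hsg_le x]
  have hg_int : Integrable g μ :=
    (integrable_const 1).mono' hg.aestronglyMeasurable (ae_of_all _ hg_le)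
  have hd_int : ∀ i, Integrable (dist · (y i)) μ := fun i => hint _ (LipschitzWith.dist_left _)
  have hgd_int : ∀ i, Integrable (g * fun x => dist x (y i)) μ := fun i =>
    (hd_int i).bdd_mul hg.aestronglyMeasurable (ae_of_all _ hg_le)
  have h_mass' : ∀ i, T i (L1Class μ fun x => 1 + s * g x) = m i := fun i => by
    rw [show (fun x => 1 + s * g x) = (1 : X → ℝ) + s • g from rfl,
      L1Class_add (f := 1) (integrable_const 1) (hg_int.smul s), L1Class_smul, map_add, map_smul,
      h_mass, hg_mass, smul_zero, add_zero]
  have h_cost' : ∑ i, T i (L1Class μ fun x => (1 + s * g x) * dist x (y i)) ≤ ε := by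
    have h_split : ∀ i, (fun x => (1 + s * g x) * dist x (y i)) =
        (dist · (y i)) + s • (g * fun x => dist x (y i)) := fun i => by
      ext x
      simp only [Pi.add_apply, Pi.smul_apply, Pi.mul_apply, smul_eq_mul]
      ring
    simp_rw [h_split, L1Class_add (hd_int _) ((hgd_int _).smul s), L1Class_smul, map_add,
      map_smul, smul_eq_mul, Finset.sum_add_distrib, ← Finset.mul_sum, hg_cost, mul_zero,
      add_zero]
    exact h_cost
  rw [kantDist_le_ofReal_iff hε]
  intro f hf
  have h_transport := integral_mul_sub_sum_le_of_mem_splittings (y := y)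
    (h := fun x => 1 + s * g x) hint hT (measurable_const.add (hg.const_mul s)) h_nonneg (C := 2)
    (fun x => by linarith [le_abs_self (s * g x), hsg_le x]) hf
  rw [integral_withDensity_eq_integral_toReal_smul (by fun_prop)
    (ae_of_all _ fun _ => ENNReal.ofReal_lt_top), hν]
  simp_rw [ENNReal.toReal_ofReal (h_nonneg _), smul_eq_mul]
  simp only [h_mass'] at h_transport
  linarith

end Perturbation

lemma exists_ne_zero_abs_le_one_sum_smul_eq_zero {κ M : Type*} [Fintype κ] [AddCommGroup M]
    [Module ℝ M] [FiniteDimensional ℝ M] (w : κ → M)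
    (h : Module.finrank ℝ M < Fintype.card κ) :
    ∃ c : κ → ℝ, c ≠ 0 ∧ (∀ j, |c j| ≤ 1) ∧ ∑ j, c j • w j = 0 := by
  obtain ⟨c, hc, j, hj⟩ := Fintype.not_linearIndependent_iff.mp fun h_ind =>
    h.not_ge h_ind.fintype_card_le_finrank
  have hc0 : c ≠ 0 := fun h0 => hj (congrFun h0 j)
  refine ⟨‖c‖⁻¹ • c, smul_ne_zero (inv_ne_zero (norm_ne_zero_iff.mpr hc0)) hc0, fun k => ?_, ?_⟩
  · rw [← Real.norm_eq_abs, ← norm_smul_inv_norm (𝕜 := ℝ) hc0]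
    exact norm_le_pi_norm _ k
  · simp_rw [Pi.smul_apply, smul_eq_mul, mul_smul]
    rw [← Finset.smul_sum, hc, smul_zero]

section Indicator

variable {X κ : Type*} [Fintype κ] {B : κ → Set X}

lemma sum_smul_indicator_one_apply_of_mem (hB : Pairwise (Disjoint on B)) (c : κ → ℝ) {j : κ}
    {x : X} (hx : x ∈ B j) : (∑ k, c k • (B k).indicator (1 : X → ℝ)) x = c j := by
  rw [Finset.sum_apply, Finset.sum_eq_single j]
  · simp [hx]
  · intro k _ hk
    simp [indicator_of_notMem (disjoint_right.mp (hB hk) hx)]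
  · simp

lemma abs_sum_smul_indicator_one_le (hB : Pairwise (Disjoint on B)) {c : κ → ℝ}
    (hc : ∀ j, |c j| ≤ 1) (x : X) : |(∑ k, c k • (B k).indicator (1 : X → ℝ)) x| ≤ 1 := by
  by_cases hx : ∃ j, x ∈ B j
  · obtain ⟨j, hj⟩ := hx
    rw [sum_smul_indicator_one_apply_of_mem hB c hj]
    exact hc j
  · push Not at hx
    simp [indicator_of_notMem (hx _)]

lemma eq_zero_of_sum_smul_indicator_one_ae_eq_zero [MeasurableSpace X] {μ : Measure X}
    (hB : Pairwise (Disjoint on B)) (hB_pos : ∀ j, 0 < μ (B j)) {c : κ → ℝ}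
    (h : ∑ k, c k • (B k).indicator (1 : X → ℝ) =ᵐ[μ] 0) : c = 0 := by
  funext j
  by_contra hcj
  refine (hB_pos j).ne' (measure_mono_null (fun x hx => ?_) (ae_iff.mp h))
  rw [mem_ofPred_eq, sum_smul_indicator_one_apply_of_mem hB c hx]
  exact hcj

end Indicator

lemma exists_ne_zero_forall_apply_L1Class_eq_zero {X : Type*} [MeasurableSpace X]
    {μ : Measure X} [IsFiniteMeasure μ] {ι κ : Type*} [Fintype ι] [Fintype κ]
    (T : ι → WeakDual ℝ (Lp ℝ 1 μ)) {d : ι → X → ℝ} (hd : ∀ i, Integrable (d i) μ)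
    {B : κ → Set X} (hB : ∀ j, MeasurableSet (B j)) (hκ : Fintype.card ι + 1 < Fintype.card κ) :
    ∃ c : κ → ℝ, c ≠ 0 ∧ (∀ j, |c j| ≤ 1) ∧
      (∀ i, T i (L1Class μ (∑ j, c j • (B j).indicator 1)) = 0) ∧
      ∑ i, T i (L1Class μ ((∑ j, c j • (B j).indicator 1) * d i)) = 0 := by
  have h_ind : ∀ j, Integrable ((B j).indicator (1 : X → ℝ)) μ := fun j =>
    (integrable_const 1).indicator (hB j)
  have h_ind_d : ∀ i j, Integrable ((B j).indicator 1 * d i) μ := fun i j =>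
    (hd i).bdd_mul (c := 1) (measurable_one.indicator (hB j)).aestronglyMeasurable
      (ae_of_all _ fun x => by by_cases hx : x ∈ B j <;> simp [hx])
  obtain ⟨c, hc0, hc1, hc⟩ := exists_ne_zero_abs_le_one_sum_smul_eq_zero
    (fun j => ((fun i => T i (L1Class μ ((B j).indicator 1))),
      ∑ i, T i (L1Class μ ((B j).indicator 1 * d i))))
    (by simpa [Module.finrank_prod, Module.finrank_fintype_fun_eq_card] using hκ)
  refine ⟨c, hc0, hc1, fun i => ?_, ?_⟩
  · rw [apply_L1Class_sum_smul (T i) h_ind]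
    simpa [Prod.fst_sum, Finset.sum_apply] using congrFun (congrArg Prod.fst hc) i
  · have h_mul : ∀ i, (∑ j, c j • (B j).indicator (1 : X → ℝ)) * d i =
        ∑ j, c j • ((B j).indicator 1 * d i) := fun i => by
      simp_rw [Finset.sum_mul, smul_mul_assoc]
    simp_rw [h_mul, apply_L1Class_sum_smul _ (h_ind_d _)]
    rw [Finset.sum_comm]
    simpa [Prod.snd_sum, Finset.mul_sum] using congrArg Prod.snd hc

lemma isProbabilityMeasure_withDensity_ofReal_one_add {Ω : Type*} [MeasurableSpace Ω]
    {μ : Measure Ω} [IsProbabilityMeasure μ] {g : Ω → ℝ} (hg : Integrable g μ)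
    (hg_zero : ∫ x, g x ∂μ = 0) (hg_nonneg : ∀ x, 0 ≤ 1 + g x) :
    IsProbabilityMeasure (μ.withDensity fun x => ENNReal.ofReal (1 + g x)) := by
  constructor
  rw [withDensity_apply _ MeasurableSet.univ, Measure.restrict_univ,
    ← ofReal_integral_eq_lintegral_ofReal
      (show Integrable (fun x => 1 + g x) μ from (integrable_const 1).add hg)
      (ae_of_all _ hg_nonneg),
    integral_add (integrable_const 1) hg, hg_zero]
  simp

lemma IsExtremePt.ae_eq_zero_of_withDensity_mem_s11 {Ω : Type*} [MeasurableSpace Ω]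
    {C : Set (ProbabilityMeasure Ω)} {μ : ProbabilityMeasure Ω} (hμ : IsExtremePt C μ)
    {g : Ω → ℝ} (hg : Measurable g) (hg_le : ∀ x, |g x| ≤ 1) (hg_zero : ∫ x, g x ∂μ = 0)
    (hC : ∀ s : ℝ, |s| = 1 → ∀ ρ : ProbabilityMeasure Ω,
      (ρ : Measure Ω) = (μ : Measure Ω).withDensity (fun x => ENNReal.ofReal (1 + s * g x)) →
        ρ ∈ C) :
    g =ᵐ[(μ : Measure Ω)] 0 := by
  let ρ : ℝ → Measure Ω := fun s =>
    (μ : Measure Ω).withDensity fun x => ENNReal.ofReal (1 + s * g x)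
  have h_nonneg : ∀ s : ℝ, |s| = 1 → ∀ x, 0 ≤ 1 + s * g x := fun s hs x => by
    have h_abs : |s * g x| ≤ 1 := by rw [abs_mul, hs, one_mul]; exact hg_le x
    linarith [neg_abs_le (s * g x)]
  have hg_int : Integrable g μ :=
    (integrable_const 1).mono' hg.aestronglyMeasurable (ae_of_all _ hg_le)
  have h_prob : ∀ s : ℝ, |s| = 1 → IsProbabilityMeasure (ρ s) := fun s hs =>
    isProbabilityMeasure_withDensity_ofReal_one_add (hg_int.const_mul s)
      (by rw [integral_const_mul, hg_zero, mul_zero]) (h_nonneg s hs)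
  have h₁ : |(1 : ℝ)| = 1 := abs_one
  have h₂ : |(-1 : ℝ)| = 1 := by simp
  let ρ₁ : ProbabilityMeasure Ω := ⟨ρ 1, h_prob 1 h₁⟩
  let ρ₂ : ProbabilityMeasure Ω := ⟨ρ (-1), h_prob (-1) h₂⟩
  have h_mid : (μ : Measure Ω) =
      (2⁻¹ : ℝ≥0∞) • (ρ₁ : Measure Ω) + (1 - 2⁻¹ : ℝ≥0∞) • (ρ₂ : Measure Ω) := by
    rw [ENNReal.one_sub_inv_two]
    change _ = 2⁻¹ • ρ 1 + 2⁻¹ • ρ (-1)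
    rw [← withDensity_smul _ (by fun_prop), ← withDensity_smul _ (by fun_prop),
      ← withDensity_add_left (by fun_prop)]
    conv_lhs => rw [← withDensity_one (μ := (μ : Measure Ω))]
    congr 1
    funext x
    simp only [Pi.add_apply, Pi.smul_apply, smul_eq_mul, Pi.one_apply]
    rw [← mul_add, ← ENNReal.ofReal_add (h_nonneg 1 h₁ x) (h_nonneg (-1) h₂ x),
      show 1 + 1 * g x + (1 + -1 * g x) = 2 by ring, ENNReal.ofReal_ofNat,
      ENNReal.inv_mul_cancel two_ne_zero ENNReal.ofNat_ne_top]
  obtain ⟨h_eq, -⟩ := hμ.2 ρ₁ (hC 1 h₁ ρ₁ rfl) ρ₂ (hC (-1) h₂ ρ₂ rfl) 2⁻¹ (by norm_num)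
    (ENNReal.inv_lt_one.mpr ENNReal.one_lt_two) h_mid
  have h_density : ρ 1 = (μ : Measure Ω).withDensity 1 := by
    rw [withDensity_one]
    exact congrArg (fun ν : ProbabilityMeasure Ω => (ν : Measure Ω)) h_eq
  rw [withDensity_eq_iff_of_sigmaFinite (by fun_prop) (by fun_prop)] at h_density
  filter_upwards [h_density] with x hx
  simpa using ENNReal.ofReal_eq_one.mp hx

lemma exists_pairwise_disjoint_measure_pos_of_not_finitelySupported {X : Type*}
    [TopologicalSpace X] [T2Space X] [HereditarilyLindelofSpace X] [MeasurableSpace X]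
    [OpensMeasurableSpace X] {μ : Measure X} {N : ℕ} (h : ¬FinitelySupported N μ) :
    ∃ B : Fin (N + 1) → Set X, (∀ j, MeasurableSet (B j)) ∧ Pairwise (Disjoint on B) ∧
      ∀ j, 0 < μ (B j) := by
  obtain ⟨u, hu_supp, hu_card⟩ : ∃ u : Finset X, ↑u ⊆ μ.support ∧ u.card = N + 1 := by
    by_cases hfin : μ.support.Finite
    · have h_card : N + 1 ≤ hfin.toFinset.card := by
        by_contra! h_le
        exact h ⟨hfin.toFinset, Nat.lt_succ_iff.mp h_le, by
          rw [Finite.coe_toFinset]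
          exact Measure.measure_compl_support⟩
      obtain ⟨u, hu, hu_card⟩ := Finset.exists_subset_card_eq h_card
      exact ⟨u, fun x hx => hfin.mem_toFinset.mp (hu hx), hu_card⟩
    · exact Set.Infinite.exists_subset_card_eq hfin (N + 1)
  obtain ⟨U, hU, hU_disj⟩ := u.finite_toSet.t2_separation
  let e : Fin (N + 1) ≃ u := (finCongr hu_card.symm).trans u.equivFin.symm
  refine ⟨fun j => U (e j), fun j => (hU _).2.measurableSet,
    fun i j hij => hU_disj (e i).2 (e j).2 (Subtype.val_injective.ne (e.injective.ne hij)),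
    fun j => ?_⟩
  exact (Measure.mem_support_iff_forall _).mp (hu_supp (e j).2) _ ((hU _).2.mem_nhds (hU _).1)

theorem IsExtremePt.finitelySupported_add_two_of_kantDist_ball {X : Type*} [MetricSpace X]
    [SecondCountableTopology X] [MeasurableSpace X] [BorelSpace X] {n : ℕ}
    {μn : ProbabilityMeasure X} (hμn : FinitelySupported n (μn : Measure X)) {ε : ℝ} (hε : 0 < ε)
    {μ : ProbabilityMeasure X}
    (hμ : IsExtremePt {μ' : ProbabilityMeasure X |
      kantDist (μ' : Measure X) (μn : Measure X) ≤ ENNReal.ofReal ε} μ) :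
    FinitelySupported (n + 2) (μ : Measure X) := by
  by_contra h_not
  obtain ⟨t, ht_card, ht⟩ := hμn
  have hν := integral_eq_sum_of_measure_compl_finset ht
  have h_ball : kantDist (μ : Measure X) μn ≤ ENNReal.ofReal ε := hμ.1
  have hint : ∀ f : X → ℝ, LipschitzWith 1 f → Integrable f μ := fun f hf =>
    integrable_of_kantDist_ne_top (fun f _ => integrable_of_measure_compl_finset ht f)
      (ne_top_of_le_ne_top ENNReal.ofReal_ne_top h_ball) hf
  obtain ⟨T, hT, h_mass, h_cost⟩ := exists_mem_splittings_cost_le (y := Subtype.val)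
    (fun _ => measureReal_nonneg) hint fun K f hf =>
      hν f ▸ integral_sub_integral_le_of_kantDist_le hε.le h_ball hf
  obtain ⟨B, hB, hB_disj, hB_pos⟩ :=
    exists_pairwise_disjoint_measure_pos_of_not_finitelySupported h_not
  obtain ⟨c, hc, hc_le, hc_mass, hc_cost⟩ := exists_ne_zero_forall_apply_L1Class_eq_zero T
    (d := fun z x => dist x z) (fun z => hint _ (LipschitzWith.dist_left _)) hB
    (by rw [Fintype.card_coe, Fintype.card_fin]; omega)
  set g := ∑ j, c j • (B j).indicator (1 : X → ℝ)
  have hg : Measurable g := by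
    rw [show g = fun x => ∑ j, (c j • (B j).indicator (1 : X → ℝ)) x from
      funext fun x => Finset.sum_apply x _ _]
    exact Finset.measurable_sum _ fun j _ => (measurable_one.indicator (hB j)).const_smul (c j)
  have hg_le := abs_sum_smul_indicator_one_le hB_disj hc_le
  have h_zero : g =ᵐ[(μ : Measure X)] 0 := hμ.ae_eq_zero_of_withDensity_mem_s11 hg hg_le
    (by rw [← sum_apply_L1Class_of_mem_splittings hT]; simp [hc_mass])
    fun s hs ρ hρ => by
      show kantDist (ρ : Measure X) μn ≤ ENNReal.ofReal ε
      rw [hρ]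
      exact kantDist_withDensity_le_of_mem_splittings hint hT h_mass hε.le h_cost hν hg hg_le
        hc_mass hc_cost hs.le
  exact hc (eq_zero_of_sum_smul_indicator_one_ae_eq_zero hB_disj hB_pos h_zero)

theorem extremePt_kantorovich_ball_finitelySupported_general
    {Y : Type*} [MetricSpace Y] [PolishSpace Y] [MeasurableSpace Y] [BorelSpace Y]
    (s : Set Y) (n : ℕ)
    (μn : ProbabilityMeasure s) (hμn : FinitelySupported n (μn : Measure s))
    (ε : ℝ) (hε : 0 < ε) (μ : ProbabilityMeasure s)
    (hμ : IsExtremePt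
      {μ' : ProbabilityMeasure s |
        kantDist (μ' : Measure s) (μn : Measure s) ≤ ENNReal.ofReal ε} μ) :
    FinitelySupported (n + 2) (μ : Measure s) :=
  hμ.finitelySupported_add_two_of_kantDist_ball hμn hε

/-- every extreme point of the closed Kantorovich ball of radius `ε` about
a measure supported on at most `n` points is supported on at most `n+2` points. -/
theorem extremePt_kantorovich_ball_finitelySupported
    {Y : Type*} [MetricSpace Y] [PolishSpace Y] [MeasurableSpace Y] [BorelSpace Y]
    (s : Set Y) (hs : MeasurableSet s) (n : ℕ)
    (μn : ProbabilityMeasure s) (hμn : FinitelySupported n (μn : Measure s))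
    (ε : ℝ) (hε : 0 < ε) (μ : ProbabilityMeasure s)
    (hμ : IsExtremePt
      {μ' : ProbabilityMeasure s |
        kantDist (μ' : Measure s) (μn : Measure s) ≤ ENNReal.ofReal ε} μ) :
    FinitelySupported (n + 2) (μ : Measure s) :=
  extremePt_kantorovich_ball_finitelySupported_general s n μn hμn ε hε μ hμ
end
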